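/- Let l⁻, r⁻ ≥ 0 be integers with r⁻ + 1 ≤ l⁻ ≤ r⁻ + 2, let a⁻_k be the optimal first-derivative coefficients on the stencil {-l⁻, …, r⁻}, and let a⁻(s) = Σ_{k=-l⁻}^{r⁻} a⁻_k s^k; write x₀⁻(θ) = Re a⁻(e^{iθ}) and y₀⁻(θ) = Im a⁻(e^{iθ}). Let q ≥ 1 and let x_∞(θ) = Σ_{k=-q}^{q} b_k e^{ikθ} (which is real), with b_k the optimal second-derivative coefficients. For R > 0 and θ ∈ [-π, π], the eigenvalues of the semi-discretized partially dissipative wave system with the symmetric pair of first-derivative discretizations (a⁺_k = -a⁻_{-k}) are λ = ½( R·x_∞(θ) - 2·x₀⁻(θ) + w ) for w ∈ ℂ with w² = R²·x_∞(θ)² - 4·y₀⁻(θ)². Then there exists a constant L > 0, depending only on l⁻, r⁻ and q, such that for every R > 0, every θ ∈ [-π, π], and every such eigenvalue λ = x + iy, one has x ≤ -R·L·y². -/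

import Mathlib

/-!
Put `s = e^{iθ}`, so that `2 - s - s⁻¹ = x := 2 - 2 cos θ ≥ 0`. Three facts about the symbols
drive the bound.
* For `r < l ≤ r + 2` the even part of the upwind symbol is a nonnegative multiple of a power of
  the Laplacian symbol, `a⁻(s) + a⁻(s⁻¹) = c (2 - s - s⁻¹)^l`; since `s⁻¹ = s̄` and the
  coefficients are real, `Re a⁻(e^{iθ}) ≥ 0`.
* `λ_∞(s) = -∑_{n ≤ q} 2 (2 - s - s⁻¹)ⁿ / (n² C(2n, n))`: every term is `≤ 0` on the unit circle
  and the first one is `-x`, so `Re λ_∞(e^{iθ}) ≤ -x`.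
* `|sin kθ| ≤ |k| |sin θ|` and `sin² θ ≤ x` give `(Im a⁻(e^{iθ}))² ≤ B² x`, `B = ∑ |a_k| |k|`.
Since `w²` is real, `w` is real or purely imaginary. If it is real then `|w| ≤ -R x_∞`, so `λ` is
real and `≤ 0`. Otherwise `Re λ ≤ R x_∞ / 2 ≤ -R x / 2` and `(Im λ)² ≤ (y₀⁻)² ≤ B² x`.
-/

/-- Optimal finite-difference coefficients for the first derivative on the
stencil `{-l, …, r}`. -/
noncomputable def aCoef (l r : ℕ) (k : ℤ) : ℝ :=
  if k = 0 then
    -∑ ν ∈ (Finset.Icc (-(l : ℤ)) (r : ℤ)).erase 0, (1 : ℝ) / (ν : ℝ)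
  else
    -((-1 : ℝ) ^ k / (k : ℝ)) *
      ((Nat.factorial l * Nat.factorial r : ℕ) : ℝ) /
      ((Nat.factorial ((l : ℤ) + k).toNat * Nat.factorial ((r : ℤ) - k).toNat : ℕ) : ℝ)

/-- The symbol `λ₀(s) = -Σ_{k=-l}^{r} a_k s^k` of the advection discretization. -/
noncomputable def lam0 (l r : ℕ) (s : ℂ) : ℂ :=
  -∑ k ∈ Finset.Icc (-(l : ℤ)) (r : ℤ), (aCoef l r k : ℂ) * s ^ k

/-- Optimal centered finite-difference coefficients for the second derivative on
the stencil `{-q, …, q}`. -/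
noncomputable def bCoef (q : ℕ) (k : ℤ) : ℝ :=
  if k = 0 then
    -∑ j ∈ Finset.Icc 1 q, 2 / (j : ℝ) ^ 2
  else
    -(2 * (-1 : ℝ) ^ k / (k : ℝ) ^ 2) *
      ((Nat.factorial q * Nat.factorial q : ℕ) : ℝ) /
      ((Nat.factorial ((q : ℤ) + k).toNat * Nat.factorial ((q : ℤ) - k).toNat : ℕ) : ℝ)

/-- The symbol `λ_∞(s) = Σ_{k=-q}^{q} b_k s^k` of the diffusion discretization. -/
noncomputable def lamInf (q : ℕ) (s : ℂ) : ℂ :=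
  ∑ k ∈ Finset.Icc (-(q : ℤ)) (q : ℤ), (bCoef q k : ℂ) * s ^ k

/-- The symbol `a⁻(s) = Σ_{k=-l}^{r} a_k s^k` of the upwind first-derivative
discretization (without the minus sign of `λ₀`). -/
noncomputable def aSym (l r : ℕ) (s : ℂ) : ℂ :=
  ∑ k ∈ Finset.Icc (-(l : ℤ)) (r : ℤ), (aCoef l r k : ℂ) * s ^ k

open Finset Polynomial ComplexConjugate
open scoped Nat

theorem Finset.sum_Icc_comp_neg {M : Type*} [AddCommMonoid M] (a b : ℤ) (f : ℤ → M) :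
    ∑ k ∈ Icc a b, f (-k) = ∑ k ∈ Icc (-b) (-a), f k :=
  sum_nbij' Neg.neg Neg.neg (by intro k; simp only [mem_Icc]; omega)
    (by intro k; simp only [mem_Icc]; omega) (by simp) (by simp) (by simp)

theorem sum_Icc_ite_mem_mul_zpow {a b c d : ℤ} (hac : a ≤ c) (hdb : d ≤ b) (f : ℤ → ℝ) (s : ℂ) :
    ∑ k ∈ Icc a b, ((if k ∈ Icc c d then f k else 0 : ℝ) : ℂ) * s ^ k =
      ∑ k ∈ Icc c d, (f k : ℂ) * s ^ k := by
  have hite (k : ℤ) : ((if k ∈ Icc c d then f k else 0 : ℝ) : ℂ) * s ^ k =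
      if k ∈ Icc c d then (f k : ℂ) * s ^ k else 0 := by
    split_ifs <;> simp
  simp only [hite]
  rw [sum_ite_mem, inter_eq_right.mpr (Icc_subset_Icc hac hdb)]

theorem Real.abs_sin_nat_mul_le (n : ℕ) (x : ℝ) : |Real.sin (n * x)| ≤ n * |Real.sin x| := by
  induction n with
  | zero => simp
  | succ n ih =>
    rw [Nat.cast_succ, add_one_mul, Real.sin_add]
    calc |Real.sin (n * x) * Real.cos x + Real.cos (n * x) * Real.sin x|
        ≤ |Real.sin (n * x)| * |Real.cos x| + |Real.cos (n * x)| * |Real.sin x| := by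
          simpa only [abs_mul] using
            abs_add_le (Real.sin (n * x) * Real.cos x) (Real.cos (n * x) * Real.sin x)
      _ ≤ n * |Real.sin x| * 1 + 1 * |Real.sin x| := by
          gcongr
          · exact Real.abs_cos_le_one x
          · exact Real.abs_cos_le_one _
      _ = (n + 1) * |Real.sin x| := by ring

theorem Real.abs_sin_int_mul_le (k : ℤ) (x : ℝ) :
    |Real.sin (k * x)| ≤ |(k : ℝ)| * |Real.sin x| := by
  rcases Int.natAbs_eq k with h | h <;> rw [h] <;> push_cast
  · simpa using Real.abs_sin_nat_mul_le k.natAbs x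
  · simpa [neg_mul, Real.sin_neg] using Real.abs_sin_nat_mul_le k.natAbs x

theorem Real.sin_sq_le_two_sub_two_mul_cos (x : ℝ) : Real.sin x ^ 2 ≤ 2 - 2 * Real.cos x := by
  nlinarith [Real.sin_sq_add_cos_sq x, Real.cos_le_one x, Real.neg_one_le_cos x]

-- The Pochhammer factor vanishes exactly when `n < j`, so stencil coefficients that fall off the
-- edge of the stencil obey the same formula as the others.
theorem ite_le_inv_factorial_eq_ascPochhammer_div (n d j : ℕ) (hj : j ≤ n + d) :
    (if j ≤ n then ((n - j)! : ℝ)⁻¹ else 0) =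
      (ascPochhammer ℝ d).eval ((n : ℝ) - j + 1) / ((n + d - j)! : ℝ) := by
  split_ifs with hjn
  · have hfac := factorial_mul_ascPochhammer ℝ (n - j) d
    rw [Nat.cast_sub hjn, show n - j + d = n + d - j by omega] at hfac
    have hjn' : (j : ℝ) ≤ n := by exact_mod_cast hjn
    have : (ascPochhammer ℝ d).eval ((n : ℝ) - j + 1) ≠ 0 :=
      (ascPochhammer_pos d _ (by linarith)).ne'
    rw [← hfac]
    field_simp
  · have hroot := ascPochhammer_eval_neg_coe_nat_of_lt (R := ℝ) (k := j - n - 1) (n := d) (by omega)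
    rw [Nat.sub_sub, Nat.cast_sub (by omega : n + 1 ≤ j)] at hroot
    push_cast at hroot
    rw [show (n : ℝ) - j + 1 = -(j - (n + 1)) by ring, hroot, zero_div]

-- For `d ≥ 3` the left side is no longer linear in `y`, and the identity fails.
theorem ascPochhammer_eval_add_sub_sub_mul (d : ℕ) (hd : d = 1 ∨ d = 2) (x y : ℝ) :
    ((ascPochhammer ℝ d).eval (x + y + 1) - (ascPochhammer ℝ d).eval (x - y + 1)) * (x + d) =
      y * (ascPochhammer ℝ d).eval (2 * x + d + 1) := by
  rcases hd with rfl | rfl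
  · simp only [ascPochhammer_one, eval_X, Nat.cast_one]
    ring
  · simp only [show (2 : ℕ) = 1 + 1 from rfl, ascPochhammer_succ_eval, ascPochhammer_one, eval_X,
      Nat.cast_one]
    ring

-- `2 - s - s⁻¹` is the symbol of the negative discrete Laplacian.
noncomputable def negLapPowCoeff (n : ℕ) (k : ℤ) : ℝ :=
  (-1 : ℝ) ^ k * ((2 * n).choose (n + k).toNat : ℝ)

theorem negLapPowCoeff_neg (n : ℕ) {k : ℤ} (hk : k ∈ Icc (-(n : ℤ)) n) :
    negLapPowCoeff n (-k) = negLapPowCoeff n k := by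
  rw [mem_Icc] at hk
  rw [negLapPowCoeff, negLapPowCoeff, show ((n : ℤ) + -k).toNat = 2 * n - (n + k).toNat by omega,
    Nat.choose_symm (by omega)]
  simp only [neg_one_zpow_eq_ite, even_neg]

theorem negLapPowCoeff_natCast (n j : ℕ) (hj : j ≤ n) :
    negLapPowCoeff n j = (-1) ^ j * (2 * n)! / ((n + j)! * (n - j)! : ℝ) := by
  rw [negLapPowCoeff, show ((n : ℤ) + j).toNat = n + j by omega, Nat.cast_choose ℝ (by omega),
    show 2 * n - (n + j) = n - j by omega, zpow_natCast, mul_div_assoc]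

theorem two_sub_sub_inv_pow_eq_sum (n : ℕ) {s : ℂ} (hs : s ≠ 0) :
    (2 - s - s⁻¹) ^ n = ∑ k ∈ Icc (-(n : ℤ)) n, (negLapPowCoeff n k : ℂ) * s ^ k := by
  have hfactor : 2 - s - s⁻¹ = (-s + 1) ^ 2 * (-s⁻¹) := by field_simp; ring
  rw [hfactor, mul_pow, ← pow_mul, add_pow, sum_mul]
  refine sum_nbij' (fun m => (m : ℤ) - n) (fun k => (k + n).toNat) ?_ ?_ ?_ ?_ ?_
  · intro m hm; simp only [mem_range, mem_Icc] at hm ⊢; omega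
  · intro k hk; simp only [mem_range, mem_Icc] at hk ⊢; omega
  · intro m _; simp
  · intro k hk; simp only [mem_Icc] at hk; omega
  · intro m hm
    rw [mem_range] at hm
    rw [negLapPowCoeff, show ((n : ℤ) + ((m : ℤ) - n)).toNat = m by omega, zpow_sub₀ hs,
      zpow_natCast, zpow_natCast]
    have hsign : (-1 : ℝ) ^ ((m : ℤ) - n) = (-1) ^ m * (-1) ^ n := by
      rw [← pow_add, ← zpow_natCast, neg_one_zpow_eq_ite, neg_one_zpow_eq_ite]
      simp [Int.even_sub, Int.even_add]
    push_cast [hsign]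
    rw [neg_pow, neg_pow s⁻¹, inv_pow]
    field_simp
    rw [one_pow, one_mul]

-- `θ² = ∑_{n ≥ 1} 2 (2 - 2 cos θ)ⁿ / (n² C(2n, n))` is the series of `4 arcsin² (√x / 2)` in
-- `x = 2 - 2 cos θ`, and `λ_∞` is minus its truncation at degree `q`.
noncomputable def lamInfSeriesCoeff (n : ℕ) : ℝ := -(2 / ((n : ℝ) ^ 2 * (2 * n).choose n))

theorem lamInfSeriesCoeff_succ_mul_negLapPowCoeff (q j : ℕ) (hj : j ≤ q + 1) :
    lamInfSeriesCoeff (q + 1) * negLapPowCoeff (q + 1) j =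
      -(2 * (-1) ^ j * (q ! : ℝ) ^ 2 / ((q + 1 + j)! * (q + 1 - j)!)) := by
  rw [lamInfSeriesCoeff, negLapPowCoeff_natCast _ _ hj, Nat.cast_choose ℝ (by omega),
    show 2 * (q + 1) - (q + 1) = q + 1 by omega, Nat.factorial_succ q]
  push_cast
  field_simp

theorem bCoef_natCast (q j : ℕ) (hj : 0 < j) :
    bCoef q j = -(2 * (-1) ^ j / (j : ℝ) ^ 2) * ((q ! : ℝ) * q !) / ((q + j)! * (q - j)!) := by
  rw [bCoef, if_neg (by omega), show ((q : ℤ) + j).toNat = q + j by omega,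
    show ((q : ℤ) - j).toNat = q - j by omega, zpow_natCast]
  push_cast
  rfl

theorem bCoef_neg (q : ℕ) (k : ℤ) : bCoef q (-k) = bCoef q k := by
  rcases eq_or_ne k 0 with rfl | hk
  · rw [neg_zero]
  · rw [bCoef, bCoef, if_neg (neg_ne_zero.mpr hk), if_neg hk, sub_neg_eq_add, ← sub_eq_add_neg,
      mul_comm (((q : ℤ) + k).toNat)!]
    simp only [neg_one_zpow_eq_ite, even_neg, Int.cast_neg, neg_sq]

theorem bCoef_succ_zero (q : ℕ) : bCoef (q + 1) 0 = bCoef q 0 - 2 / ((q : ℝ) + 1) ^ 2 := by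
  simp only [bCoef, ↓reduceIte, sum_Icc_succ_top (by omega : 1 ≤ q + 1)]
  push_cast
  ring

theorem bCoef_succ_natCast (q j : ℕ) (hj : j ≤ q + 1) :
    bCoef (q + 1) j = (if j ≤ q then bCoef q j else 0) +
      lamInfSeriesCoeff (q + 1) * negLapPowCoeff (q + 1) j := by
  rw [lamInfSeriesCoeff_succ_mul_negLapPowCoeff q j hj]
  rcases Nat.eq_zero_or_pos j with rfl | hj0
  · rw [if_pos (Nat.zero_le q), Nat.cast_zero, bCoef_succ_zero, add_zero, Nat.sub_zero,
      pow_zero, Nat.factorial_succ]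
    push_cast
    field_simp
    ring
  · have hind := ite_le_inv_factorial_eq_ascPochhammer_div q 1 j hj
    have hite : (if j ≤ q then bCoef q j else 0) =
        -(2 * (-1) ^ j / (j : ℝ) ^ 2) * ((q ! : ℝ) * q !) / (q + j)! *
          (if j ≤ q then ((q - j)! : ℝ)⁻¹ else 0) := by
      split_ifs
      · rw [bCoef_natCast q j hj0]; ring
      · rw [mul_zero]
    rw [hite, hind, bCoef_natCast (q + 1) j hj0, ascPochhammer_one, eval_X,
      show q + 1 + j = (q + j) + 1 by omega, Nat.factorial_succ (q + j), Nat.factorial_succ q]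
    push_cast
    field_simp
    ring

theorem bCoef_succ (q : ℕ) {k : ℤ} (hk : k ∈ Icc (-((q + 1 : ℕ) : ℤ)) (q + 1 : ℕ)) :
    bCoef (q + 1) k = (if k ∈ Icc (-(q : ℤ)) q then bCoef q k else 0) +
      lamInfSeriesCoeff (q + 1) * negLapPowCoeff (q + 1) k := by
  rw [mem_Icc] at hk
  rcases Int.natAbs_eq k with h | h
  · rw [h, bCoef_succ_natCast q _ (by omega)]
    congr 2
    simp only [mem_Icc]
    exact propext (by constructor <;> intro <;> omega)
  · have hk' : (k.natAbs : ℤ) ∈ Icc (-((q + 1 : ℕ) : ℤ)) (q + 1 : ℕ) := by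
      rw [mem_Icc]; omega
    rw [h, bCoef_neg, negLapPowCoeff_neg _ hk', bCoef_succ_natCast q _ (by omega), bCoef_neg]
    congr 2
    simp only [mem_Icc]
    exact propext (by constructor <;> intro <;> omega)

theorem lamInf_succ (q : ℕ) {s : ℂ} (hs : s ≠ 0) :
    lamInf (q + 1) s = lamInf q s + lamInfSeriesCoeff (q + 1) * (2 - s - s⁻¹) ^ (q + 1) := by
  rw [lamInf, sum_congr rfl fun k hk => congrArg (fun b : ℝ => (b : ℂ) * s ^ k) (bCoef_succ q hk),
    two_sub_sub_inv_pow_eq_sum _ hs, mul_sum]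
  simp only [Complex.ofReal_add, add_mul, sum_add_distrib, Complex.ofReal_mul, mul_assoc]
  rw [sum_Icc_ite_mem_mul_zpow (by omega) (by omega), lamInf]

theorem lamInf_eq_sum (q : ℕ) {s : ℂ} (hs : s ≠ 0) :
    lamInf q s = ∑ n ∈ range q, lamInfSeriesCoeff (n + 1) * (2 - s - s⁻¹) ^ (n + 1) := by
  induction q with
  | zero => simp [lamInf, bCoef]
  | succ q ih => rw [lamInf_succ q hs, ih, sum_range_succ]

theorem factorial_two_mul_add_eq (r d : ℕ) :
    ((2 * (r + d))! : ℝ) = (r + d + r)! * (ascPochhammer ℝ d).eval (2 * (r : ℝ) + d + 1) := by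
  rw [show 2 * (r + d) = r + d + r + d by ring, ← factorial_mul_ascPochhammer]
  push_cast
  congr 2
  ring

noncomputable def aSymEvenConst (l r : ℕ) : ℝ := (l ! * r ! : ℝ) / ((l + r)! * l)

theorem aCoef_natCast (l r j : ℕ) (hj : 0 < j) :
    aCoef l r j = -((-1) ^ j / (j : ℝ)) * (l ! * r ! : ℝ) / ((l + j)! * (r - j)!) := by
  rw [aCoef, if_neg (by omega), show ((l : ℤ) + j).toNat = l + j by omega,
    show ((r : ℤ) - j).toNat = r - j by omega, zpow_natCast]
  push_cast
  rfl

theorem aCoef_neg_natCast (l r j : ℕ) (hj : 0 < j) :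
    aCoef l r (-j) = (-1) ^ j / (j : ℝ) * (l ! * r ! : ℝ) / ((l - j)! * (r + j)!) := by
  rw [aCoef, if_neg (by omega), show ((l : ℤ) + -j).toNat = l - j by omega,
    show ((r : ℤ) - -j).toNat = r + j by omega]
  simp only [neg_one_zpow_eq_ite, even_neg, Int.even_coe_nat, neg_one_pow_eq_ite (R := ℝ)]
  push_cast
  split_ifs <;> ring

theorem aCoef_add_aCoef_neg_natCast (r d : ℕ) (hd : d = 1 ∨ d = 2) (j : ℕ) (hj0 : 0 < j)
    (hj : j ≤ r + d) :
    (if j ≤ r then aCoef (r + d) r j else 0) + aCoef (r + d) r (-j) =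
      aSymEvenConst (r + d) r * negLapPowCoeff (r + d) j := by
  have hite : (if j ≤ r then aCoef (r + d) r j else 0) =
      -((-1) ^ j / (j : ℝ)) * ((r + d)! * r ! : ℝ) / (r + d + j)! *
        (if j ≤ r then ((r - j)! : ℝ)⁻¹ else 0) := by
    split_ifs
    · rw [aCoef_natCast _ _ _ hj0]; ring
    · rw [mul_zero]
  have hup : ((r + j)! : ℝ) * (ascPochhammer ℝ d).eval ((r : ℝ) + j + 1) = (r + j + d)! := by
    simpa using factorial_mul_ascPochhammer ℝ (r + j) d
  have hpoly := ascPochhammer_eval_add_sub_sub_mul d hd r j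
  rw [hite, ite_le_inv_factorial_eq_ascPochhammer_div r d j hj, aCoef_neg_natCast _ _ _ hj0,
    negLapPowCoeff_natCast _ _ (by omega), aSymEvenConst, factorial_two_mul_add_eq,
    show r + d + j = r + j + d by ring, ← hup]
  have : ((r + d : ℕ) : ℝ) ≠ 0 := by rcases hd with rfl | rfl <;> positivity
  have : (ascPochhammer ℝ d).eval ((r : ℝ) + j + 1) ≠ 0 :=
    (ascPochhammer_pos d _ (by positivity)).ne'
  push_cast at *
  generalize (ascPochhammer ℝ d).eval (2 * (r : ℝ) + d + 1) = Pc at *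
  field_simp
  linear_combination hpoly

theorem aCoef_zero_eq_neg_sum_Icc (l r : ℕ) :
    aCoef l r 0 = -∑ ν ∈ Icc (-(l : ℤ)) r, (1 : ℝ) / ν := by
  -- the excluded index contributes `1 / 0 = 0`
  rw [aCoef, if_pos rfl, sum_erase _ (by simp)]

theorem aCoef_add_zero_eq_sum_range (r d : ℕ) :
    aCoef (r + d) r 0 = ∑ i ∈ range d, (1 : ℝ) / (r + i + 1) := by
  induction d with
  | zero =>
    have hodd := sum_Icc_comp_neg (-(r : ℤ)) r (fun ν : ℤ => (1 : ℝ) / ν)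
    simp only [neg_neg, Int.cast_neg, div_neg, sum_neg_distrib] at hodd
    rw [add_zero, aCoef_zero_eq_neg_sum_Icc, sum_range_zero]
    linarith
  | succ d ih =>
    rw [aCoef_zero_eq_neg_sum_Icc] at ih ⊢
    rw [← insert_Icc_add_one_left_eq_Icc (by omega), sum_insert (by simp only [mem_Icc]; omega),
      show -((r + (d + 1) : ℕ) : ℤ) + 1 = -((r + d : ℕ) : ℤ) by push_cast; ring, neg_add, ih,
      sum_range_succ]
    push_cast
    rw [div_neg]
    ring

theorem two_mul_aCoef_zero (r d : ℕ) (hd : d = 1 ∨ d = 2) :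
    2 * aCoef (r + d) r 0 = aSymEvenConst (r + d) r * negLapPowCoeff (r + d) 0 := by
  have hc := negLapPowCoeff_natCast (r + d) 0 (by omega)
  have hl : ((r ! : ℝ)) * (ascPochhammer ℝ d).eval ((r : ℝ) + 1) = (r + d)! := by
    exact_mod_cast factorial_mul_ascPochhammer ℝ r d
  rw [Nat.cast_zero] at hc
  rw [hc, aCoef_add_zero_eq_sum_range, aSymEvenConst, factorial_two_mul_add_eq, add_zero,
    Nat.sub_zero, ← hl]
  rcases hd with rfl | rfl
  · simp only [ascPochhammer_one, eval_X, sum_range_one]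
    push_cast
    field_simp
    ring
  · simp only [show (2 : ℕ) = 1 + 1 from rfl, ascPochhammer_succ_eval, ascPochhammer_one, eval_X,
      sum_range_succ, sum_range_zero]
    push_cast
    field_simp
    ring

theorem aCoef_ite_add_ite_neg (r d : ℕ) (hd : d = 1 ∨ d = 2) {k : ℤ}
    (hk : k ∈ Icc (-((r + d : ℕ) : ℤ)) (r + d : ℕ)) :
    (if k ∈ Icc (-((r + d : ℕ) : ℤ)) r then aCoef (r + d) r k else 0) +
      (if -k ∈ Icc (-((r + d : ℕ) : ℤ)) r then aCoef (r + d) r (-k) else 0) =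
      aSymEvenConst (r + d) r * negLapPowCoeff (r + d) k := by
  have hnat (j : ℕ) (hj : j ≤ r + d) :
      (if (j : ℤ) ∈ Icc (-((r + d : ℕ) : ℤ)) r then aCoef (r + d) r j else 0) +
        (if -(j : ℤ) ∈ Icc (-((r + d : ℕ) : ℤ)) r then aCoef (r + d) r (-j) else 0) =
        aSymEvenConst (r + d) r * negLapPowCoeff (r + d) j := by
    have hneg_mem : -(j : ℤ) ∈ Icc (-((r + d : ℕ) : ℤ)) r := by rw [mem_Icc]; omega
    rw [if_pos hneg_mem]
    rcases Nat.eq_zero_or_pos j with rfl | hj0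
    · rw [if_pos (by simp), Nat.cast_zero, neg_zero, ← two_mul, two_mul_aCoef_zero r d hd]
    · rw [← aCoef_add_aCoef_neg_natCast r d hd j hj0 hj]
      congr 2
      simp only [mem_Icc, Nat.cast_le]
      exact propext (by constructor <;> intro <;> omega)
  rw [mem_Icc] at hk
  rcases Int.natAbs_eq k with h | h
  · rw [h]; exact hnat _ (by omega)
  · have hk' : (k.natAbs : ℤ) ∈ Icc (-((r + d : ℕ) : ℤ)) (r + d : ℕ) := by rw [mem_Icc]; omega
    rw [h, negLapPowCoeff_neg _ hk', neg_neg, add_comm]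
    exact hnat _ (by omega)

theorem aSym_add_aSym_inv (l r : ℕ) (h1 : r + 1 ≤ l) (h2 : l ≤ r + 2) {s : ℂ} (hs : s ≠ 0) :
    aSym l r s + aSym l r s⁻¹ = aSymEvenConst l r * (2 - s - s⁻¹) ^ l := by
  obtain ⟨d, hd, rfl⟩ : ∃ d, (d = 1 ∨ d = 2) ∧ l = r + d := ⟨l - r, by omega, by omega⟩
  have hext (t : ℂ) : aSym (r + d) r t = ∑ k ∈ Icc (-((r + d : ℕ) : ℤ)) (r + d : ℕ),
      ((if k ∈ Icc (-((r + d : ℕ) : ℤ)) r then aCoef (r + d) r k else 0 : ℝ) : ℂ) * t ^ k :=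
    (sum_Icc_ite_mem_mul_zpow le_rfl (by omega) _ t).symm
  have hinv : aSym (r + d) r s⁻¹ = ∑ k ∈ Icc (-((r + d : ℕ) : ℤ)) (r + d : ℕ),
      ((if -k ∈ Icc (-((r + d : ℕ) : ℤ)) r then aCoef (r + d) r (-k) else 0 : ℝ) : ℂ) * s ^ k := by
    rw [hext, ← neg_neg ((r + d : ℕ) : ℤ), ← sum_Icc_comp_neg]
    simp only [neg_neg, inv_zpow', zpow_neg, inv_inv]
  rw [hext, hinv, ← sum_add_distrib, two_sub_sub_inv_pow_eq_sum _ hs, mul_sum]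
  refine sum_congr rfl fun k hk => ?_
  rw [← add_mul, ← Complex.ofReal_add, aCoef_ite_add_ite_neg r d hd hk]
  push_cast
  ring

theorem Complex.exp_ofReal_mul_I_inv (θ : ℝ) :
    (Complex.exp (θ * Complex.I))⁻¹ = conj (Complex.exp (θ * Complex.I)) := by
  rw [← Complex.exp_neg, ← Complex.exp_conj, map_mul, Complex.conj_ofReal, Complex.conj_I, mul_neg]

theorem two_sub_exp_sub_inv (θ : ℝ) :
    2 - Complex.exp (θ * Complex.I) - (Complex.exp (θ * Complex.I))⁻¹ =
      ((2 - 2 * Real.cos θ : ℝ) : ℂ) := by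
  rw [← Complex.exp_neg, Complex.ofReal_sub, Complex.ofReal_mul, Complex.ofReal_cos, Complex.cos,
    neg_mul, Complex.ofReal_ofNat]
  ring

theorem aSym_conj (l r : ℕ) (s : ℂ) : aSym l r (conj s) = conj (aSym l r s) := by
  simp only [aSym, map_sum, map_mul, map_zpow₀, Complex.conj_ofReal]

theorem aSym_re_nonneg (l r : ℕ) (h1 : r + 1 ≤ l) (h2 : l ≤ r + 2) (θ : ℝ) :
    0 ≤ (aSym l r (Complex.exp (θ * Complex.I))).re := by
  have h := congrArg Complex.re (aSym_add_aSym_inv l r h1 h2 (Complex.exp_ne_zero (θ * Complex.I)))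
  rw [Complex.exp_ofReal_mul_I_inv, aSym_conj, Complex.add_re, Complex.conj_re,
    ← Complex.exp_ofReal_mul_I_inv, two_sub_exp_sub_inv, ← Complex.ofReal_pow,
    ← Complex.ofReal_mul, Complex.ofReal_re] at h
  have hconst : 0 ≤ aSymEvenConst l r := by unfold aSymEvenConst; positivity
  have hx : 0 ≤ 2 - 2 * Real.cos θ := by linarith [Real.cos_le_one θ]
  nlinarith [mul_nonneg hconst (pow_nonneg hx l)]

theorem aSym_im_eq_sum (l r : ℕ) (θ : ℝ) :
    (aSym l r (Complex.exp (θ * Complex.I))).im =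
      ∑ k ∈ Icc (-(l : ℤ)) r, aCoef l r k * Real.sin (k * θ) := by
  rw [aSym, Complex.im_sum]
  refine sum_congr rfl fun k _ => ?_
  rw [← Complex.exp_int_mul, ← mul_assoc, ← Complex.ofReal_intCast, ← Complex.ofReal_mul,
    Complex.im_ofReal_mul, Complex.exp_ofReal_mul_I_im]

theorem aSym_im_sq_le (l r : ℕ) (θ : ℝ) :
    (aSym l r (Complex.exp (θ * Complex.I))).im ^ 2 ≤
      (∑ k ∈ Icc (-(l : ℤ)) r, |aCoef l r k| * |(k : ℝ)|) ^ 2 * (2 - 2 * Real.cos θ) := by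
  have habs : |(aSym l r (Complex.exp (θ * Complex.I))).im| ≤
      (∑ k ∈ Icc (-(l : ℤ)) r, |aCoef l r k| * |(k : ℝ)|) * |Real.sin θ| := by
    rw [aSym_im_eq_sum, sum_mul]
    refine (abs_sum_le_sum_abs _ _).trans (sum_le_sum fun k _ => ?_)
    rw [abs_mul, mul_assoc]
    exact mul_le_mul_of_nonneg_left (Real.abs_sin_int_mul_le k θ) (abs_nonneg _)
  calc (aSym l r (Complex.exp (θ * Complex.I))).im ^ 2
      ≤ ((∑ k ∈ Icc (-(l : ℤ)) r, |aCoef l r k| * |(k : ℝ)|) * |Real.sin θ|) ^ 2 := by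
        rw [← sq_abs]; exact pow_le_pow_left₀ (abs_nonneg _) habs 2
    _ ≤ _ := by
        rw [mul_pow, sq_abs]
        exact mul_le_mul_of_nonneg_left (Real.sin_sq_le_two_sub_two_mul_cos θ) (sq_nonneg _)

theorem lamInfSeriesCoeff_nonpos (n : ℕ) : lamInfSeriesCoeff n ≤ 0 :=
  neg_nonpos.mpr (by positivity)

theorem lamInf_re_le (q : ℕ) (hq : 1 ≤ q) (θ : ℝ) :
    (lamInf q (Complex.exp (θ * Complex.I))).re ≤ -(2 - 2 * Real.cos θ) := by
  obtain ⟨q, rfl⟩ := Nat.exists_eq_add_of_le' hq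
  have hx : 0 ≤ 2 - 2 * Real.cos θ := by linarith [Real.cos_le_one θ]
  rw [lamInf_eq_sum _ (Complex.exp_ne_zero _), two_sub_exp_sub_inv, sum_range_succ',
    Complex.add_re, Complex.re_sum]
  simp only [← Complex.ofReal_pow, ← Complex.ofReal_mul, Complex.ofReal_re]
  have hrest : ∑ n ∈ range q, lamInfSeriesCoeff (n + 1 + 1) * (2 - 2 * Real.cos θ) ^ (n + 1 + 1)
      ≤ 0 :=
    sum_nonpos fun _ _ =>
      mul_nonpos_of_nonpos_of_nonneg (lamInfSeriesCoeff_nonpos _) (by positivity)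
  have hone : lamInfSeriesCoeff (0 + 1) = -1 := by norm_num [lamInfSeriesCoeff]
  rw [hone, zero_add, pow_one]
  linarith

theorem re_le_neg_mul_im_sq_of_sq_eq {p X Y K : ℝ} {w : ℂ} (hK : 0 ≤ K) (hX : 0 ≤ X)
    (hp : p ≤ -(K * Y ^ 2)) (hw : w ^ 2 = (p : ℂ) ^ 2 - 4 * (Y : ℂ) ^ 2) :
    ((1 / 2 : ℂ) * (((p - 2 * X : ℝ) : ℂ) + w)).re ≤
      -(K / 2 * ((1 / 2 : ℂ) * (((p - 2 * X : ℝ) : ℂ) + w)).im ^ 2) := by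
  have hre : w.re ^ 2 - w.im ^ 2 = p ^ 2 - 4 * Y ^ 2 := by
    simpa [sq] using congrArg Complex.re hw
  have him : w.re * w.im = 0 := by
    have := congrArg Complex.im hw
    simp [sq] at this
    linarith
  simp only [Complex.mul_re, Complex.mul_im, Complex.add_re, Complex.add_im, Complex.ofReal_re,
    Complex.ofReal_im, Complex.div_ofNat_re, Complex.div_ofNat_im, Complex.one_re, Complex.one_im]
  have hY : 0 ≤ K * Y ^ 2 := by positivity
  rcases mul_eq_zero.mp him with hwre | hwim
  · have him_sq : w.im ^ 2 ≤ 4 * Y ^ 2 := by nlinarith [sq_nonneg p]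
    rw [hwre]
    nlinarith [mul_le_mul_of_nonneg_left him_sq hK]
  · have hwre_le : w.re ≤ -p := by nlinarith [sq_nonneg (w.re + p), sq_nonneg Y]
    rw [hwim]
    nlinarith

/-- Global bound on the eigenvalue trajectory of the semi-discretized partially
dissipative wave system with a symmetric pair of upwind/downwind discretizations:
every eigenvalue `λ = ½(R·x_∞(θ) - 2·x₀⁻(θ) + w)`, where
`w² = R²·x_∞(θ)² - 4·y₀⁻(θ)²`, satisfies `Re λ ≤ -R·L·(Im λ)²` for a constant
`L > 0` depending only on the spatial discretizations. -/
theorem wave_symmetric_global_bound (l r : ℕ) (h1 : r + 1 ≤ l) (h2 : l ≤ r + 2)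
    (q : ℕ) (hq : 1 ≤ q) :
    ∃ L > (0 : ℝ), ∀ R : ℝ, 0 < R → ∀ θ ∈ Set.Icc (-Real.pi) Real.pi,
      ∀ w lam : ℂ,
        w ^ 2 = (((R * (lamInf q (Complex.exp (θ * Complex.I))).re : ℝ)) : ℂ) ^ 2 -
          4 * (((aSym l r (Complex.exp (θ * Complex.I))).im : ℂ)) ^ 2 →
        lam = ((1 : ℂ) / 2) *
          (((R * (lamInf q (Complex.exp (θ * Complex.I))).re -
              2 * (aSym l r (Complex.exp (θ * Complex.I))).re : ℝ) : ℂ) + w) →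
        lam.re ≤ -(R * L * lam.im ^ 2) := by
  set B := ∑ k ∈ Icc (-(l : ℤ)) r, |aCoef l r k| * |(k : ℝ)|
  have hM : 0 < B ^ 2 + 1 := by positivity
  refine ⟨1 / (B ^ 2 + 1) / 2, by positivity, fun R hR θ _ w lam hw hlam => ?_⟩
  set x := 2 - 2 * Real.cos θ
  have hx : 0 ≤ x := by linarith [Real.cos_le_one θ]
  have hYx : (aSym l r (Complex.exp (θ * Complex.I))).im ^ 2 / (B ^ 2 + 1) ≤ x := by
    rw [div_le_iff₀ hM]
    nlinarith [aSym_im_sq_le l r θ]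
  have hdiss : R * (lamInf q (Complex.exp (θ * Complex.I))).re ≤
      -(R / (B ^ 2 + 1) * (aSym l r (Complex.exp (θ * Complex.I))).im ^ 2) :=
    calc R * (lamInf q (Complex.exp (θ * Complex.I))).re ≤ R * -x :=
          mul_le_mul_of_nonneg_left (lamInf_re_le q hq θ) hR.le
      _ ≤ R * -((aSym l r (Complex.exp (θ * Complex.I))).im ^ 2 / (B ^ 2 + 1)) := by gcongr
      _ = _ := by ring
  rw [hlam]
  refine (re_le_neg_mul_im_sq_of_sq_eq (by positivity) (aSym_re_nonneg l r h1 h2 θ) hdiss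
    hw).trans_eq ?_
  ring
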